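/- arXiv:2305.15704 — 2 statements merged into one kernel-verified Lean document; each statement's English description precedes it below -/
import Mathlib

section
/- Let f : ℝ^d → ℝ be L-smooth convex, h : ℝ^d → ℝ∪{∞} be closed, proper, convex, N ≥ 1, and let (x_i, y_i, z_i)_{i=0}^N be generated by the OptISTA iteration started at z_0 = y_0 = x_0. Then x_N = y_N. -/
open Finset

noncomputable section

/-- `ℝ^d` as a Euclidean space. -/
abbrev E (d : ℕ) := EuclideanSpace ℝ (Fin d)

/-- `f : ℝ^d → ℝ` is `L`-smooth convex: convex, differentiable, with `L`-Lipschitz gradient. -/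
def LSmoothConvex {d : ℕ} (L : ℝ) (f : E d → ℝ) : Prop :=
  ConvexOn ℝ Set.univ f ∧ Differentiable ℝ f ∧
    ∀ x y : E d, ‖gradient f x - gradient f y‖ ≤ L * ‖x - y‖

/-- `h : ℝ^d → ℝ ∪ {∞}` is closed (lower semicontinuous), proper, and convex. -/
def ClosedProperConvexER {d : ℕ} (h : E d → EReal) : Prop :=
  LowerSemicontinuous h ∧ (∃ x, h x ≠ ⊤) ∧ (∀ x, h x ≠ ⊥) ∧
    ∀ x y : E d, ∀ a b : ℝ, 0 ≤ a → 0 ≤ b → a + b = 1 →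
      h (a • x + b • y) ≤ (a : EReal) * h x + (b : EReal) * h y

/-- `p = prox_{γ h}(x)`, i.e. `p` minimizes `z ↦ h z + ‖z - x‖² / (2γ)`. -/
def IsProx {d : ℕ} (h : E d → EReal) (γ : ℝ) (x p : E d) : Prop :=
  ∀ w : E d, h p + ((‖p - x‖ ^ 2 / (2 * γ) : ℝ) : EReal)
    ≤ h w + ((‖w - x‖ ^ 2 / (2 * γ) : ℝ) : EReal)

/-! By the definition of `z`, `y (i + 1) = y i + γ i • (z (i + 1) - x i)` (as `γ i > 0`, because
`θ` increases up to `N - 1`), so the iteration is linear in the differences and one proves by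
induction that `x i - y i = Λ i • (x i - z i)` for a scalar sequence `Λ` with `Λ 0 = 0`.
Comparing coefficients of `x i - z i` and of `z (i + 1) - x i` gives two formulas for
`Λ (i + 1)`; the step sizes `γ i` are exactly such that they agree, thanks to
`θ i ^ 2 = θ i + θ (i - 1) ^ 2`, and the modified last step `θ N ^ 2 = θ N + 2 * θ (N - 1) ^ 2`
makes `Λ N = 0`. -/

namespace OptISTA

theorem sq_eq_add_of_eq_one_add_sqrt_div_two {s t : ℝ} (hs : 0 ≤ s)
    (ht : t = (1 + √(1 + 4 * s)) / 2) : t ^ 2 = t + s := by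
  have hsqrt : √(1 + 4 * s) ^ 2 = 1 + 4 * s := Real.sq_sqrt (by linarith)
  rw [ht]
  linear_combination hsqrt / 4

theorem one_le_of_eq_one_add_sqrt_div_two {s t : ℝ} (hs : 0 ≤ s)
    (ht : t = (1 + √(1 + 4 * s)) / 2) : 1 ≤ t := by
  have : 1 ≤ √(1 + 4 * s) := Real.one_le_sqrt.mpr (by linarith)
  rw [ht]
  linarith

section Theta

variable {N : ℕ} {θ : ℕ → ℝ}

theorem theta_sq (hθ : ∀ i, 1 ≤ i → i + 1 ≤ N → θ i = (1 + √(1 + 4 * θ (i - 1) ^ 2)) / 2)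
    {i : ℕ} (hi : 1 ≤ i) (hiN : i + 1 ≤ N) : θ i ^ 2 = θ i + θ (i - 1) ^ 2 :=
  sq_eq_add_of_eq_one_add_sqrt_div_two (sq_nonneg _) (hθ i hi hiN)

theorem theta_sq_last (hθN : θ N = (1 + √(1 + 8 * θ (N - 1) ^ 2)) / 2) :
    θ N ^ 2 = θ N + 2 * θ (N - 1) ^ 2 :=
  sq_eq_add_of_eq_one_add_sqrt_div_two (by positivity) (by rw [hθN]; ring_nf)

theorem one_le_theta (hθ0 : θ 0 = 1)
    (hθ : ∀ i, 1 ≤ i → i + 1 ≤ N → θ i = (1 + √(1 + 4 * θ (i - 1) ^ 2)) / 2)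
    (hθN : θ N = (1 + √(1 + 8 * θ (N - 1) ^ 2)) / 2) {i : ℕ} (hi : i ≤ N) : 1 ≤ θ i := by
  rcases hi.eq_or_lt with rfl | hi
  · exact one_le_of_eq_one_add_sqrt_div_two (s := 2 * θ (i - 1) ^ 2) (by positivity)
      (by rw [hθN]; ring_nf)
  · cases i with
    | zero => exact hθ0.ge
    | succ i => exact one_le_of_eq_one_add_sqrt_div_two (sq_nonneg _) (hθ _ (by omega) hi)

theorem monotoneOn_theta (hθ0 : θ 0 = 1)
    (hθ : ∀ i, 1 ≤ i → i + 1 ≤ N → θ i = (1 + √(1 + 4 * θ (i - 1) ^ 2)) / 2)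
    (hθN : θ N = (1 + √(1 + 8 * θ (N - 1) ^ 2)) / 2) : MonotoneOn θ (Set.Iic (N - 1)) := by
  refine monotoneOn_of_le_succ Set.ordConnected_Iic fun i _ _ hi => ?_
  rw [Set.mem_Iic, Order.succ_eq_add_one] at hi
  rw [Order.succ_eq_add_one]
  have hsq := theta_sq hθ (i := i + 1) (by omega) (by omega)
  have h₀ := one_le_theta hθ0 hθ hθN (i := i) (by omega)
  have h₁ := one_le_theta hθ0 hθ hθN (i := i + 1) (by omega)
  rw [Nat.add_sub_cancel] at hsq
  nlinarith

theorem gamma_pos (hθ0 : θ 0 = 1)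
    (hθ : ∀ i, 1 ≤ i → i + 1 ≤ N → θ i = (1 + √(1 + 4 * θ (i - 1) ^ 2)) / 2)
    (hθN : θ N = (1 + √(1 + 8 * θ (N - 1) ^ 2)) / 2) {γ : ℕ → ℝ}
    (hγ : ∀ i, i < N → γ i = 2 * θ i / θ N ^ 2 * (θ N ^ 2 - 2 * θ i ^ 2 + θ i))
    {i : ℕ} (hi : i < N) : 0 < γ i := by
  have hθi := one_le_theta hθ0 hθ hθN hi.le
  have hθN₁ := one_le_theta hθ0 hθ hθN le_rfl
  have hmono : θ i ≤ θ (N - 1) :=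
    monotoneOn_theta hθ0 hθ hθN (Set.mem_Iic.mpr (by omega)) (Set.mem_Iic.mpr le_rfl) (by omega)
  have hlast := theta_sq_last hθN
  have : 0 < θ N ^ 2 - 2 * θ i ^ 2 + θ i := by nlinarith
  rw [hγ i hi]
  positivity

end Theta

def multiplier (θ γ : ℕ → ℝ) : ℕ → ℝ
  | 0 => 0
  | i + 1 => (θ (i + 1) + 2 * θ i - 1 - γ i * θ (i + 1)) / (2 * θ i - 1)

section Multiplier

variable {θ γ : ℕ → ℝ}

theorem multiplier_succ_mul {i : ℕ} (hθ₁ : θ (i + 1) ≠ 0) (hθ₀ : 2 * θ i - 1 ≠ 0) :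
    multiplier θ γ (i + 1) * ((θ i - 1) / θ (i + 1) + θ i / θ (i + 1))
      = 1 + (θ i - 1) / θ (i + 1) + θ i / θ (i + 1) - γ i := by
  simp only [multiplier]
  field_simp
  ring

theorem multiplier_add {M : ℝ} (hM : M ≠ 0) (hθ0 : θ 0 = 1) {i : ℕ}
    (hsq : 1 ≤ i → θ i ^ 2 = θ i + θ (i - 1) ^ 2)
    (hγ : ∀ k ≤ i, γ k = 2 * θ k / M ^ 2 * (M ^ 2 - 2 * θ k ^ 2 + θ k))
    (hθ : ∀ k ≤ i, 2 * θ k - 1 ≠ 0) (hθ₁ : θ (i + 1) ≠ 0) :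
    multiplier θ γ i + (θ i - 1) / θ (i + 1)
      = multiplier θ γ (i + 1) * ((θ i - 1) / θ (i + 1)) := by
  cases i with
  | zero => simp [multiplier, hθ0]
  | succ j =>
    have hsq := hsq (by omega)
    simp only [multiplier, Nat.add_sub_cancel] at hsq ⊢
    rw [hγ j (by omega), hγ (j + 1) le_rfl]
    have h₀ := hθ j (by omega)
    have h₁ := hθ (j + 1) le_rfl
    rw [div_add_div _ _ h₀ hθ₁, div_mul_div_comm,
      div_eq_div_iff (mul_ne_zero h₀ hθ₁) (mul_ne_zero h₁ hθ₁)]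
    field_simp
    linear_combination (2 * θ (j + 1) * θ (j + 2) * (2 * θ (j + 1) - 1) * (1 - 2 * θ j)) * hsq

theorem multiplier_eq_zero {N : ℕ} (hθN : θ N ≠ 0) (hlast : θ N ^ 2 = θ N + 2 * θ (N - 1) ^ 2)
    (hγ : ∀ i < N, γ i = 2 * θ i / θ N ^ 2 * (θ N ^ 2 - 2 * θ i ^ 2 + θ i)) :
    multiplier θ γ N = 0 := by
  cases N with
  | zero => rfl
  | succ n =>
    simp only [multiplier, Nat.add_sub_cancel] at hlast ⊢
    rw [hγ n n.lt_succ_self, div_eq_zero_iff]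
    left
    field_simp
    linear_combination (1 - 2 * θ n) * hlast

end Multiplier

theorem sub_eq_smul_sub_of_recurrence {R V : Type*} [CommRing R] [AddCommGroup V] [Module R V]
    {N : ℕ} {a b γ Λ : ℕ → R} {x y z : ℕ → V} (hΛ0 : Λ 0 = 0) (hy0 : y 0 = x 0)
    (hΛa : ∀ i < N, Λ i + a i = Λ (i + 1) * a i)
    (hΛb : ∀ i < N, Λ (i + 1) * (a i + b i) = 1 + a i + b i - γ i)
    (hy : ∀ i < N, y (i + 1) = y i + γ i • (z (i + 1) - x i))
    (hx : ∀ i < N, x (i + 1) = z (i + 1) + a i • (z (i + 1) - z i) + b i • (z (i + 1) - x i)) :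
    ∀ i ≤ N, x i - y i = Λ i • (x i - z i) := by
  intro i
  induction i with
  | zero => simp [hΛ0, hy0]
  | succ i ih =>
    intro hi
    have hyi : y i = x i - Λ i • (x i - z i) := by rw [← ih (by omega)]; abel
    set w := z (i + 1) - x i
    have hz : z (i + 1) = x i + w := by simp [w]
    calc x (i + 1) - y (i + 1)
        = (Λ i + a i) • (x i - z i) + (1 + a i + b i - γ i) • w := by
          rw [hx i hi, hy i hi, hyi, hz]; module
      _ = Λ (i + 1) • (a i • (x i - z i) + (a i + b i) • w) := by
          rw [hΛa i hi, ← hΛb i hi]; module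
      _ = Λ (i + 1) • (x (i + 1) - z (i + 1)) := by
          rw [hx i hi, hz]; module

end OptISTA

open OptISTA

theorem optista_xN_eq_yN_general
    (d N : ℕ)
    (θ : ℕ → ℝ) (hθ0 : θ 0 = 1)
    (hθ : ∀ i, 1 ≤ i → i + 1 ≤ N → θ i = (1 + Real.sqrt (1 + 4 * θ (i - 1) ^ 2)) / 2)
    (hθN : θ N = (1 + Real.sqrt (1 + 8 * θ (N - 1) ^ 2)) / 2)
    (γ : ℕ → ℝ)
    (hγ : ∀ i, i < N → γ i = 2 * θ i / θ N ^ 2 * (θ N ^ 2 - 2 * θ i ^ 2 + θ i))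
    (x y z : ℕ → E d)
    (hy0 : y 0 = x 0)
    (hz : ∀ i, i < N → z (i + 1) = x i + (γ i)⁻¹ • (y (i + 1) - y i))
    (hx : ∀ i, i < N →
      x (i + 1) = z (i + 1) + ((θ i - 1) / θ (i + 1)) • (z (i + 1) - z i)
        + (θ i / θ (i + 1)) • (z (i + 1) - x i)) :
    x N = y N := by
  have hθ_pos {i : ℕ} (hi : i ≤ N) : 0 < θ i := (one_le_theta hθ0 hθ hθN hi).trans_lt' one_pos
  have hθ_ne {i : ℕ} (hi : i ≤ N) : 2 * θ i - 1 ≠ 0 := by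
    linarith [one_le_theta hθ0 hθ hθN hi]
  have hy : ∀ i < N, y (i + 1) = y i + γ i • (z (i + 1) - x i) := fun i hi => by
    rw [hz i hi, add_sub_cancel_left, smul_inv_smul₀ (gamma_pos hθ0 hθ hθN hγ hi).ne']
    abel
  have key := sub_eq_smul_sub_of_recurrence (Λ := multiplier θ γ) rfl hy0
    (fun i hi => multiplier_add (hθ_pos le_rfl).ne' hθ0 (fun h => theta_sq hθ h hi)
      (fun k hk => hγ k (by omega)) (fun k hk => hθ_ne (by omega)) (hθ_pos hi).ne')
    (fun i hi => multiplier_succ_mul (hθ_pos hi).ne' (hθ_ne hi.le)) hy hx N le_rfl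
  rwa [multiplier_eq_zero (hθ_pos le_rfl).ne' (theta_sq_last hθN) hγ, zero_smul,
    sub_eq_zero] at key

/-- Lemma 2: for the OptISTA iterates, `x N = y N`. -/
theorem optista_xN_eq_yN
    (d N : ℕ) (hN : 1 ≤ N) (L : ℝ) (hL : 0 < L)
    (f : E d → ℝ) (hf : LSmoothConvex L f)
    (h : E d → EReal) (hh : ClosedProperConvexER h)
    (θ : ℕ → ℝ) (hθ0 : θ 0 = 1)
    (hθ : ∀ i, 1 ≤ i → i + 1 ≤ N → θ i = (1 + Real.sqrt (1 + 4 * θ (i - 1) ^ 2)) / 2)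
    (hθN : θ N = (1 + Real.sqrt (1 + 8 * θ (N - 1) ^ 2)) / 2)
    (γ : ℕ → ℝ)
    (hγ : ∀ i, i < N → γ i = 2 * θ i / θ N ^ 2 * (θ N ^ 2 - 2 * θ i ^ 2 + θ i))
    (x y z : ℕ → E d)
    (hy0 : y 0 = x 0) (hz0 : z 0 = x 0)
    (hy : ∀ i, i < N →
      IsProx h (γ i / L) (y i - (γ i / L) • gradient f (x i)) (y (i + 1)))
    (hz : ∀ i, i < N → z (i + 1) = x i + (γ i)⁻¹ • (y (i + 1) - y i))
    (hx : ∀ i, i < N →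
      x (i + 1) = z (i + 1) + ((θ i - 1) / θ (i + 1)) • (z (i + 1) - z i)
        + (θ i / θ (i + 1)) • (z (i + 1) - x i)) :
    x N = y N :=
  optista_xN_eq_yN_general d N θ hθ0 hθ hθN γ hγ x y z hy0 hz hx

end
end

section
/- Let N ≥ 1, e_0,…,e_N the standard unit vectors of ℝ^{N+1}, a_j ∈ ℝ, x_j ∈ ℝ^{N+1}, h_j ∈ ℝ for j ∈ [0:N−1], h_N, h_⋆ ∈ ℝ, and γ_i > 0 for i ∈ [0:N−1]. Define H_j(x) = h_j + ⟨a_j e_j, x − x_j⟩ for j ∈ [0:N−1], H_N(x) = h_N + δ_{{x : ⟨e_N,x⟩ ≤ 0}}(x), H_⋆(x) = h_⋆, and H_I(x) = max_{j∈{0,…,N,⋆}} H_j(x). Suppose x_i ∈ span{e_0,…,e_{i−1}} for i ∈ [0:N−1] (so x_0 = 0), and h_i − γ_i a_i² ≥ h_j for all i ∈ [0:N−1] and all j ∈ {i+1,…,N,⋆}. Then for each i ∈ [0:N−1]: if x ∈ span{e_0,…,e_{i−1}}, then prox_{γ_i H_I}(x) ∈ span{e_0,…,e_i}. (Here span{}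 = {0}.) -/
open Finset

noncomputable section

/-- The `j`-th standard unit vector of `ℝ^m` (and `0` if `j ≥ m`). -/
def unitVec (m : ℕ) (j : ℕ) : E m :=
  if hj : j < m then EuclideanSpace.single ⟨j, hj⟩ (1 : ℝ) else 0

/-- `span{e_0, …, e_{i-1}}` in `ℝ^m` (with `span{} = {0}`). -/
def coordSpan (m i : ℕ) : Submodule ℝ (E m) :=
  Submodule.span ℝ (unitVec m '' {j : ℕ | j < i})

/-- The affine piece `H_j(x) = h_j + ⟨a_j e_j, x - x_j⟩`. -/
def Haff (N : ℕ) (a : ℕ → ℝ) (xv : ℕ → E (N + 1)) (hv : ℕ → ℝ) (j : ℕ)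
    (x : E (N + 1)) : ℝ :=
  hv j + inner ℝ (a j • unitVec (N + 1) j) (x - xv j)

open Classical in
/-- The piece `H_N(x) = h_N + δ_{{x : ⟨e_N, x⟩ ≤ 0}}(x)`. -/
def Hlast (N : ℕ) (hlastv : ℝ) (x : E (N + 1)) : EReal :=
  (hlastv : EReal) + if (inner ℝ (unitVec (N + 1) N) x : ℝ) ≤ 0 then (0 : EReal) else ⊤

/-- `H_{[0:i]}(x) = max_{j ∈ [0:i]} H_j(x)` (as an extended real). -/
def Hmax (N : ℕ) (a : ℕ → ℝ) (xv : ℕ → E (N + 1)) (hv : ℕ → ℝ) (i : ℕ)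
    (x : E (N + 1)) : EReal :=
  ⨆ j : Fin (i + 1), ((Haff N a xv hv j x : ℝ) : EReal)

/-- `H_I(x) = max_{j ∈ {0,…,N,⋆}} H_j(x)` where the pieces `H_0,…,H_{N-1}` are affine,
`H_N` is affine plus a half-space indicator, and `H_⋆` is constant. -/
def HI (N : ℕ) (a : ℕ → ℝ) (xv : ℕ → E (N + 1)) (hv : ℕ → ℝ) (hlastv hstarv : ℝ)
    (x : E (N + 1)) : EReal :=
  (⨆ j : Fin N, ((Haff N a xv hv j x : ℝ) : EReal)) ⊔ Hlast N hlastv x ⊔ (hstarv : EReal)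


/-! Write `p = prox_{γ_i H_I}(x)` and compare `p` with the points
`z_t = (p_0, …, p_{i-1}, t, 0, …, 0)`. The pieces `H_j`, `j < i`, agree at `z_t` and at `p`,
`H_i(z_t) = h_i + a_i t`, and every other piece is at most `c = h_i - γ_i a_i²` at `z_t`.
Since `x ∈ span{e_0, …, e_{i-1}}`, `‖p - x‖² = ‖z_t - x‖² + S + p_i² - t²` with
`S = ∑_{j > i} p_j²`. If `H_I(p) ≥ c`, minimality of `p` against `z_{p_i}` gives `S ≤ 0`;
otherwise minimality against `z_{-γ_i a_i}`, together with `H_I(p) ≥ h_i + a_i p_i`, gives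
`S + (p_i + γ_i a_i)² ≤ 0`. So `S = 0`, i.e. `p ∈ span{e_0, …, e_i}`. -/

section Coordinates

variable {m : ℕ}

lemma coordSpan_eq_span_basisFun (k : ℕ) :
    coordSpan m k =
      Submodule.span ℝ ((EuclideanSpace.basisFun (Fin m) ℝ).toBasis '' {j | (j : ℕ) < k}) := by
  refine le_antisymm (Submodule.span_le.2 ?_) (Submodule.span_mono ?_)
  · rintro _ ⟨j, hj, rfl⟩
    unfold unitVec
    split_ifs with hjm
    · exact Submodule.subset_span ⟨⟨j, hjm⟩, hj, by simp⟩
    · exact Submodule.zero_mem _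
  · rintro _ ⟨j, hj, rfl⟩
    exact ⟨j, hj, by simp [unitVec]⟩

lemma mem_coordSpan_iff {k : ℕ} {y : E m} :
    y ∈ coordSpan m k ↔ ∀ j : Fin m, k ≤ (j : ℕ) → y j = 0 := by
  rw [coordSpan_eq_span_basisFun, Module.Basis.mem_span_image]
  refine ⟨fun h j hj => ?_, fun h j hj => ?_⟩
  · by_contra hne
    exact absurd (h (by simpa using hne)) (by simpa using hj)
  · by_contra hjk
    exact (Finsupp.mem_support_iff.1 hj) (h j (by simpa using hjk))

lemma inner_unitVec_left {j : ℕ} (hj : j < m) (y : E m) :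
    inner ℝ (unitVec m j) y = y ⟨j, hj⟩ := by
  simp [unitVec, hj, EuclideanSpace.inner_single_left]

def truncUpdate (K : Fin m) (y : E m) (t : ℝ) : E m :=
  WithLp.toLp 2 fun j => if j < K then y j else if j = K then t else 0

lemma truncUpdate_mem_coordSpan (K : Fin m) (y : E m) (t : ℝ) :
    truncUpdate K y t ∈ coordSpan m (K + 1) :=
  mem_coordSpan_iff.2 fun j hj => by
    have hjK : K < j := Fin.lt_def.2 (by omega)
    simp [truncUpdate, hjK.ne', not_lt.2 hjK.le]

lemma norm_sub_sq_eq_truncUpdate {K : Fin m} {x : E m} (hx : x ∈ coordSpan m K)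
    (y : E m) (t : ℝ) :
    ‖y - x‖ ^ 2 =
      ‖truncUpdate K y t - x‖ ^ 2 + ‖y - truncUpdate K y (y K)‖ ^ 2 + y K ^ 2 - t ^ 2 := by
  have hx0 := mem_coordSpan_iff.1 hx
  have hK : y K ^ 2 - t ^ 2 = ∑ j, if j = K then y j ^ 2 - t ^ 2 else 0 := by simp
  simp only [EuclideanSpace.real_norm_sq_eq, add_sub_assoc, hK, ← Finset.sum_add_distrib]
  refine Finset.sum_congr rfl fun j _ => ?_
  rcases lt_trichotomy j K with hj | rfl | hj
  · simp [truncUpdate, hj, hj.ne]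
  · simp [truncUpdate, hx0 j le_rfl]
  · simp [truncUpdate, hj.ne', not_lt.2 hj.le, hx0 j (Fin.le_def.1 hj.le)]

end Coordinates

section PiecewiseModel

variable {N : ℕ} {a : ℕ → ℝ} {xv : ℕ → E (N + 1)} {hv : ℕ → ℝ} {hlastv hstarv : ℝ}

lemma Haff_apply {j : ℕ} (hj : j < N + 1) (y : E (N + 1)) :
    Haff N a xv hv j y = hv j + a j * (y ⟨j, hj⟩ - xv j ⟨j, hj⟩) := by
  rw [Haff, real_inner_smul_left, inner_unitVec_left hj, PiLp.sub_apply]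

lemma Haff_apply_of_mem_coordSpan {j : ℕ} (hj : j < N + 1) (hxj : xv j ∈ coordSpan (N + 1) j)
    (y : E (N + 1)) :
    Haff N a xv hv j y = hv j + a j * y ⟨j, hj⟩ := by
  rw [Haff_apply hj, mem_coordSpan_iff.1 hxj _ le_rfl, sub_zero]

lemma Hlast_eq_of_nonpos {y : E (N + 1)} (hy : y (Fin.last N) ≤ 0) :
    Hlast N hlastv y = hlastv := by
  have hy' : y ⟨N, N.lt_succ_self⟩ ≤ 0 := hy
  simp [Hlast, inner_unitVec_left N.lt_succ_self, hy']

lemma Haff_le_HI (j : Fin N) (y : E (N + 1)) :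
    (Haff N a xv hv j y : EReal) ≤ HI N a xv hv hlastv hstarv y :=
  le_sup_of_le_left (le_sup_of_le_left (le_iSup (fun j : Fin N => (Haff N a xv hv j y : EReal)) j))

lemma hstarv_le_HI (y : E (N + 1)) : (hstarv : EReal) ≤ HI N a xv hv hlastv hstarv y :=
  le_sup_right

lemma HI_le {y : E (N + 1)} {r : EReal} (haff : ∀ j : Fin N, (Haff N a xv hv j y : EReal) ≤ r)
    (hlast : Hlast N hlastv y ≤ r) (hstar : (hstarv : EReal) ≤ r) :
    HI N a xv hv hlastv hstarv y ≤ r :=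
  sup_le (sup_le (iSup_le haff) hlast) hstar

lemma HI_ne_bot (y : E (N + 1)) : HI N a xv hv hlastv hstarv y ≠ ⊥ :=
  ne_bot_of_le_ne_bot (EReal.coe_ne_bot _) (hstarv_le_HI y)

lemma HI_ne_top {y : E (N + 1)} (hy : y (Fin.last N) ≤ 0) :
    HI N a xv hv hlastv hstarv y ≠ ⊤ := by
  set M := ⨆ j : Fin N, Haff N a xv hv j y
  refine ne_top_of_le_ne_top (EReal.coe_ne_top (max (max M hlastv) hstarv))
    (HI_le (fun j => ?_) ?_ ?_)
  · exact EReal.coe_le_coe_iff.2 <| le_max_of_le_left <| le_max_of_le_left <|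
      le_ciSup (f := fun j : Fin N => Haff N a xv hv j y) (Finite.bddAbove_range _) j
  · exact (Hlast_eq_of_nonpos hy).le.trans
      (EReal.coe_le_coe_iff.2 (le_max_of_le_left (le_max_right _ _)))
  · exact EReal.coe_le_coe_iff.2 (le_max_right _ _)

lemma HI_truncUpdate_le (hxv : ∀ j, j < N → xv j ∈ coordSpan (N + 1) j) {i : ℕ} (hi : i < N)
    {c : ℝ} (hnext : ∀ j, i < j → j < N → hv j ≤ c) (hlast : hlastv ≤ c) (hstar : hstarv ≤ c)
    (y : E (N + 1)) (t : ℝ) :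
    HI N a xv hv hlastv hstarv (truncUpdate ⟨i, by omega⟩ y t) ≤
      HI N a xv hv hlastv hstarv y ⊔ ((hv i + a i * t : ℝ) : EReal) ⊔ (c : EReal) := by
  refine HI_le (fun j => ?_) ?_ (le_sup_of_le_right (EReal.coe_le_coe_iff.2 hstar))
  · rcases lt_trichotomy (j : ℕ) i with hj | rfl | hj
    · refine le_sup_of_le_left (le_sup_of_le_left (le_of_eq_of_le ?_ (Haff_le_HI j y)))
      simp [Haff_apply, truncUpdate, Fin.lt_def, hj]
    · refine le_sup_of_le_left (le_sup_of_le_right (le_of_eq ?_))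
      simp [Haff_apply_of_mem_coordSpan (by omega) (hxv j j.2), truncUpdate]
    · refine le_sup_of_le_right (EReal.coe_le_coe_iff.2 (le_of_eq_of_le ?_ (hnext j hj j.2)))
      simp [Haff_apply_of_mem_coordSpan (by omega) (hxv j j.2), truncUpdate, Fin.lt_def,
        Fin.ext_iff, hj.ne', not_lt.2 hj.le]
  · refine (Hlast_eq_of_nonpos (le_of_eq ?_)).trans_le
      (le_sup_of_le_right (EReal.coe_le_coe_iff.2 hlast))
    simp [truncUpdate, Fin.lt_def, Fin.ext_iff, Fin.last, not_lt.2 hi.le, hi.ne']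

end PiecewiseModel

namespace IsProx

variable {d : ℕ} {h : E d → EReal} {γ : ℝ} {x p : E d}

lemma ne_top (hp : IsProx h γ x p) {z : E d} (hz : h z ≠ ⊤) : h p ≠ ⊤ := by
  have := hp z
  contrapose! this
  rw [this, EReal.top_add_coe]
  exact lt_top_iff_ne_top.2 (EReal.add_ne_top hz (EReal.coe_ne_top _))

lemma add_le (hp : IsProx h γ x p) {A D : ℝ} (hA : h p = A) {z : E d} (hz : h z ≤ D) :
    A + ‖p - x‖ ^ 2 / (2 * γ) ≤ D + ‖z - x‖ ^ 2 / (2 * γ) := by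
  have := (hp z).trans (add_le_add_left hz _)
  rwa [hA, ← EReal.coe_add, ← EReal.coe_add, EReal.coe_le_coe_iff] at this

end IsProx

lemma nonpos_of_forall_le_max {A S u b a γ : ℝ} (hγ : 0 < γ) (hlow : b + a * u ≤ A)
    (h : ∀ t, A + (S + u ^ 2 - t ^ 2) / (2 * γ) ≤ max (max A (b + a * t)) (b - γ * a ^ 2)) :
    S ≤ 0 := by
  have key : ∀ t,
      S + u ^ 2 - t ^ 2 ≤ (max (max A (b + a * t)) (b - γ * a ^ 2) - A) * (2 * γ) :=
    fun t => (div_le_iff₀ (by positivity)).1 (by linarith [h t])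
  rcases le_total (b - γ * a ^ 2) A with hA | hA
  · have := key u
    rw [max_eq_left hlow, max_eq_left hA, sub_self, zero_mul] at this
    linarith
  · have := key (-(γ * a))
    rw [show b + a * -(γ * a) = b - γ * a ^ 2 by ring, max_eq_right (max_le hA le_rfl)] at this
    nlinarith [sq_nonneg (u + γ * a)]

theorem prox_HI_zero_chain_general
    (N : ℕ) (a : ℕ → ℝ) (xv : ℕ → E (N + 1)) (hv : ℕ → ℝ)
    (hlastv hstarv : ℝ) (γ : ℕ → ℝ) (hγ : ∀ i, i < N → 0 < γ i)
    (hxv : ∀ i, i < N → xv i ∈ coordSpan (N + 1) i)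
    (hineq : ∀ i, i < N →
      (∀ j, i < j → j < N → hv j ≤ hv i - γ i * (a i) ^ 2) ∧
      hlastv ≤ hv i - γ i * (a i) ^ 2 ∧
      hstarv ≤ hv i - γ i * (a i) ^ 2) :
    ∀ i, i < N → ∀ x : E (N + 1), x ∈ coordSpan (N + 1) i →
      ∀ p : E (N + 1), IsProx (HI N a xv hv hlastv hstarv) (γ i) x p →
        p ∈ coordSpan (N + 1) (i + 1) := by
  intro i hi x hx p hp
  set K : Fin (N + 1) := ⟨i, by omega⟩
  obtain ⟨hnext, hlast, hstar⟩ := hineq i hi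
  obtain ⟨A, hA⟩ : ∃ A : ℝ, HI N a xv hv hlastv hstarv p = A :=
    ⟨_, (EReal.coe_toReal (hp.ne_top (HI_ne_top (y := 0) le_rfl)) (HI_ne_bot p)).symm⟩
  have hlow : hv i + a i * p K ≤ A := by
    rw [← EReal.coe_le_coe_iff, ← hA, ← Haff_apply_of_mem_coordSpan (by omega) (hxv i hi)]
    exact Haff_le_HI ⟨i, hi⟩ p
  have htail : ‖p - truncUpdate K p (p K)‖ ^ 2 ≤ 0 := by
    refine nonpos_of_forall_le_max (hγ i hi) hlow fun t => ?_
    have hz := HI_truncUpdate_le (a := a) hxv hi hnext hlast hstar p t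
    simp only [hA, ← EReal.coe_strictMono.monotone.map_max] at hz
    have := hp.add_le hA hz
    rw [norm_sub_sq_eq_truncUpdate (K := K) hx p t] at this
    linear_combination this
  have hp_eq : p = truncUpdate K p (p K) := by
    simpa [sub_eq_zero] using htail
  exact hp_eq ▸ truncUpdate_mem_coordSpan K p (p K)

/-- Lemma 8, proximal zero-chain property of `H_I`.
If `x_i ∈ span{e_0,…,e_{i-1}}` for `i ∈ [0:N-1]` and
`h_i - γ_i a_i² ≥ h_j` for all `i ∈ [0:N-1]` and all `j ∈ {i+1,…,N,⋆}`, then for each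
`i ∈ [0:N-1]`: `x ∈ span{e_0,…,e_{i-1}}` implies
`prox_{γ_i H_I}(x) ∈ span{e_0,…,e_i}`. -/
theorem prox_HI_zero_chain
    (N : ℕ) (hN : 1 ≤ N) (a : ℕ → ℝ) (xv : ℕ → E (N + 1)) (hv : ℕ → ℝ)
    (hlastv hstarv : ℝ) (γ : ℕ → ℝ) (hγ : ∀ i, i < N → 0 < γ i)
    (hxv : ∀ i, i < N → xv i ∈ coordSpan (N + 1) i)
    (hineq : ∀ i, i < N →
      (∀ j, i < j → j < N → hv j ≤ hv i - γ i * (a i) ^ 2) ∧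
      hlastv ≤ hv i - γ i * (a i) ^ 2 ∧
      hstarv ≤ hv i - γ i * (a i) ^ 2) :
    ∀ i, i < N → ∀ x : E (N + 1), x ∈ coordSpan (N + 1) i →
      ∀ p : E (N + 1), IsProx (HI N a xv hv hlastv hstarv) (γ i) x p →
        p ∈ coordSpan (N + 1) (i + 1) :=
  prox_HI_zero_chain_general N a xv hv hlastv hstarv γ hγ hxv hineq

end
end
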